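/- arXiv:1303.0309 — 2 statements merged into one kernel-verified Lean document; each statement's English description precedes it below -/
import Mathlib

section
/- For the Gaussian RBF kernel k_σ(x,y) = exp(−‖x−y‖²/(2σ²)) on ℝ^d and one-dimensional Gaussian measures P_i = N(m_i, s_i²) and P_j = N(m_j, s_j²) on ℝ, the expected kernel satisfies ∬ k_σ(x,y) dP_i(x) dP_j(y) = exp(−(m_i−m_j)²/(2(s_i²+s_j²+σ²))) / √((s_i²+s_j²+σ²)/σ²). -/
open MeasureTheory ProbabilityTheory Real
open scoped NNReal

/-! Smoothing a Gaussian measure `N(m, v)` with the Gaussian bump of variance `t` gives, by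
completing the square, a bump of variance `v + t` scaled by `√(t / (v + t))`. Applying this
first to the inner integral (`t = σ²`) and then to the outer one (`t = s_j² + σ²`) gives the
closed form. -/

lemma gaussianPDFReal_mul_exp_neg_sq_div {m : ℝ} {v : ℝ≥0} (hv : v ≠ 0) {t : ℝ} (ht : 0 < t)
    (x y : ℝ) :
    gaussianPDFReal m v y * exp (-(x - y) ^ 2 / (2 * t)) =
      (√(2 * π * v))⁻¹ * exp (-(x - m) ^ 2 / (2 * (v + t))) *
        exp (-((v + t) / (2 * v * t)) * (y - (m * t + x * v) / (v + t)) ^ 2) := by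
  have hv' : (0 : ℝ) < v := NNReal.coe_pos.mpr (pos_iff_ne_zero.mpr hv)
  simp only [gaussianPDFReal, mul_assoc, ← exp_add]
  congr 2
  field_simp
  ring

theorem integral_exp_neg_sq_div_gaussianReal (m : ℝ) (v : ℝ≥0) {t : ℝ} (ht : 0 < t) (x : ℝ) :
    ∫ y, exp (-(x - y) ^ 2 / (2 * t)) ∂gaussianReal m v =
      √(t / (v + t)) * exp (-(x - m) ^ 2 / (2 * (v + t))) := by
  rcases eq_or_ne v 0 with rfl | hv
  · simp [gaussianReal_zero_var, div_self ht.ne']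
  have hv' : (0 : ℝ) < v := NNReal.coe_pos.mpr (pos_iff_ne_zero.mpr hv)
  simp_rw [integral_gaussianReal_eq_integral_smul hv, smul_eq_mul,
    gaussianPDFReal_mul_exp_neg_sq_div hv ht, integral_const_mul]
  rw [integral_sub_right_eq_self (fun y ↦ exp (-((v + t) / (2 * v * t)) * y ^ 2)),
    integral_gaussian]
  have hscale : (√(2 * π * v))⁻¹ * √(π / ((v + t) / (2 * v * t))) = √(t / (v + t)) := by
    rw [← sqrt_inv, ← sqrt_mul (by positivity)]
    congr 1
    field_simp
  rw [← hscale]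
  ring

/-- For the Gaussian RBF kernel `k_σ(x,y) = exp(−(x−y)²/(2σ²))` on ℝ
and Gaussian measures `P_i = N(m_i, s_i²)`, `P_j = N(m_j, s_j²)`,
`∬ k_σ dP_i dP_j = exp(−(m_i−m_j)²/(2(s_i²+s_j²+σ²))) / √((s_i²+s_j²+σ²)/σ²)`. -/
theorem expected_gaussian_kernel_of_gaussians
    (σ : ℝ) (hσ : 0 < σ) (mi mj : ℝ) (si sj : NNReal) :
    ∫ x, (∫ y, exp (-(x - y) ^ 2 / (2 * σ ^ 2)) ∂(gaussianReal mj (sj ^ 2)))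
        ∂(gaussianReal mi (si ^ 2))
      = exp (-(mi - mj) ^ 2 / (2 * ((si : ℝ) ^ 2 + (sj : ℝ) ^ 2 + σ ^ 2)))
        / Real.sqrt (((si : ℝ) ^ 2 + (sj : ℝ) ^ 2 + σ ^ 2) / σ ^ 2) := by
  set S := (si : ℝ) ^ 2 + (sj : ℝ) ^ 2 + σ ^ 2
  have hσ2 : 0 < σ ^ 2 := by positivity
  have hT : 0 < (sj : ℝ) ^ 2 + σ ^ 2 := by positivity
  have inner (x : ℝ) : ∫ y, exp (-(x - y) ^ 2 / (2 * σ ^ 2)) ∂gaussianReal mj (sj ^ 2) =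
      √(σ ^ 2 / ((sj : ℝ) ^ 2 + σ ^ 2)) * exp (-(mj - x) ^ 2 / (2 * ((sj : ℝ) ^ 2 + σ ^ 2))) := by
    rw [integral_exp_neg_sq_div_gaussianReal mj _ hσ2, NNReal.coe_pow, sub_sq_comm]
  have outer : ∫ x, exp (-(mj - x) ^ 2 / (2 * ((sj : ℝ) ^ 2 + σ ^ 2))) ∂gaussianReal mi (si ^ 2) =
      √(((sj : ℝ) ^ 2 + σ ^ 2) / S) * exp (-(mi - mj) ^ 2 / (2 * S)) := by
    rw [integral_exp_neg_sq_div_gaussianReal mi _ hT, NNReal.coe_pow, sub_sq_comm, ← add_assoc]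
  simp_rw [inner, integral_const_mul, outer]
  rw [← mul_assoc, ← sqrt_mul (by positivity), div_eq_mul_inv (exp _), mul_comm (exp _), ← sqrt_inv,
    inv_div]
  congr 2
  field_simp
end

section
/- Minimum enclosing sphere on the unit sphere equals max-margin separation from origin: for unit vectors v_1,…,v_n in a real Hilbert space whose convex hull does not contain 0, the center c* of the minimum enclosing ball of {v_1,…,v_n} restricted to the convex hull (i.e., the minimizer of max_i ‖v_i − c‖ over c ∈ conv{v_i}) is a positive scalar multiple of the minimum norm point w* of conv{v_1,…,v_n}. -/
open scoped RealInnerProductSpace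

/-!
Let `w` be the minimum norm point of `K = conv{vᵢ}`. Its variational inequality `‖w‖² ≤ ⟪q, w⟫`
(`q ∈ K`) together with `‖vᵢ - x‖² = 1 - 2⟪vᵢ, x⟫ + ‖x‖²` on the unit sphere gives
`‖vᵢ - w‖² ≤ 1 - ‖w‖²` for every `i`. Conversely, for any centre `c`, the linear functional
`⟪·, c⟫` attains its minimum over `K` at some vertex `vⱼ`, so `⟪vⱼ, c⟫ ≤ ⟪w, c⟫` and
`‖vⱼ - c‖² ≥ 1 - ‖w‖² + ‖c - w‖²`. Hence the enclosing radius around `c` exceeds that around `w`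
by a quadratic term in `‖c - w‖`, and a minimizing centre must be `w` itself.
-/

section

variable {H : Type*} [NormedAddCommGroup H] [InnerProductSpace ℝ H]

theorem norm_sq_le_inner_of_forall_norm_le {K : Set H} (hK : Convex ℝ K) {w : H} (hw : w ∈ K)
    (hwmin : ∀ q ∈ K, ‖w‖ ≤ ‖q‖) {q : H} (hq : q ∈ K) : ‖w‖ ^ 2 ≤ ⟪q, w⟫ := by
  have : Nonempty K := ⟨⟨w, hw⟩⟩
  have hinf : ‖0 - w‖ = ⨅ p : K, ‖0 - (p : H)‖ := by
    refine le_antisymm (le_ciInf fun p ↦ by simpa using hwmin p p.2) ?_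
    exact ciInf_le ⟨0, by rintro _ ⟨p, rfl⟩; positivity⟩ (⟨w, hw⟩ : K)
  have hvar := (norm_eq_iInf_iff_real_inner_le_zero hK hw).mp hinf q hq
  rw [zero_sub, inner_neg_left, inner_sub_right, real_inner_self_eq_norm_sq,
    real_inner_comm] at hvar
  linarith

theorem norm_sub_sq_of_norm_eq_one {u : H} (hu : ‖u‖ = 1) (x : H) :
    ‖u - x‖ ^ 2 = 1 - 2 * ⟪u, x⟫ + ‖x‖ ^ 2 := by
  rw [norm_sub_sq_real, hu, one_pow]

theorem exists_inner_le_of_mem_convexHull {ι : Type*} (v : ι → H) {w : H}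
    (hw : w ∈ convexHull ℝ (Set.range v)) (c : H) : ∃ j, ⟪c, v j⟫ ≤ ⟪c, w⟫ := by
  obtain ⟨_, ⟨j, rfl⟩, hj⟩ := ((innerₛₗ ℝ c).concaveOn convex_univ).exists_le_of_mem_convexHull
    (Set.subset_univ _) hw
  exact ⟨j, hj⟩

section UnitVectors

variable {ι : Type*} {v : ι → H} (hunit : ∀ i, ‖v i‖ = 1) {w : H}
  (hw : w ∈ convexHull ℝ (Set.range v)) (hwmin : ∀ q ∈ convexHull ℝ (Set.range v), ‖w‖ ≤ ‖q‖)
include hunit hw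

include hwmin in
theorem norm_sub_sq_le_one_sub_norm_sq_of_forall_norm_le (i : ι) :
    ‖v i - w‖ ^ 2 ≤ 1 - ‖w‖ ^ 2 := by
  have := norm_sq_le_inner_of_forall_norm_le (convex_convexHull ℝ _) hw hwmin
    (subset_convexHull ℝ _ ⟨i, rfl⟩)
  rw [norm_sub_sq_of_norm_eq_one (hunit i)]
  linarith

theorem exists_one_sub_norm_sq_add_norm_sub_sq_le (c : H) :
    ∃ j, 1 - ‖w‖ ^ 2 + ‖c - w‖ ^ 2 ≤ ‖v j - c‖ ^ 2 := by
  obtain ⟨j, hj⟩ := exists_inner_le_of_mem_convexHull v hw c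
  refine ⟨j, ?_⟩
  rw [norm_sub_sq_of_norm_eq_one (hunit j), norm_sub_sq_real]
  linarith [real_inner_comm c (v j)]

include hwmin in
theorem iSup_norm_sub_sq_add_norm_sub_sq_le [Finite ι] (c : H) :
    (⨆ i, ‖v i - w‖) ^ 2 + ‖c - w‖ ^ 2 ≤ (⨆ i, ‖v i - c‖) ^ 2 := by
  obtain ⟨j, hj⟩ := exists_one_sub_norm_sq_add_norm_sub_sq_le hunit hw c
  have : Nonempty ι := ⟨j⟩
  have hw_radius : (⨆ i, ‖v i - w‖) ^ 2 ≤ 1 - ‖w‖ ^ 2 := by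
    obtain ⟨i, hi⟩ := Finite.exists_max fun i ↦ ‖v i - w‖
    rw [le_antisymm (ciSup_le hi) (le_ciSup (f := fun i ↦ ‖v i - w‖) (Finite.bddAbove_range _) i)]
    exact norm_sub_sq_le_one_sub_norm_sq_of_forall_norm_le hunit hw hwmin i
  have hc_radius : ‖v j - c‖ ≤ ⨆ i, ‖v i - c‖ := le_ciSup (f := fun i ↦ ‖v i - c‖) (Finite.bddAbove_range _) j
  nlinarith [norm_nonneg (v j - c)]

end UnitVectors

end

theorem mes_center_eq_scaled_min_norm_point_general
    {H : Type*} [NormedAddCommGroup H] [InnerProductSpace ℝ H]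
    (n : ℕ) (v : Fin n → H) (hunit : ∀ i, ‖v i‖ = 1)
    (w : H) (hw : w ∈ convexHull ℝ (Set.range v))
    (hwmin : ∀ q ∈ convexHull ℝ (Set.range v), ‖w‖ ≤ ‖q‖)
    (c : H)
    (hcmin : ∀ c' ∈ convexHull ℝ (Set.range v),
      (⨆ i, ‖v i - c‖) ≤ ⨆ i, ‖v i - c'‖) :
    ∃ t : ℝ, 0 < t ∧ c = t • w := by
  have hgrowth := iSup_norm_sub_sq_add_norm_sub_sq_le hunit hw hwmin c
  have hradius : (⨆ i, ‖v i - c‖) ^ 2 ≤ (⨆ i, ‖v i - w‖) ^ 2 :=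
    pow_le_pow_left₀ (Real.iSup_nonneg fun _ ↦ norm_nonneg _) (hcmin w hw) 2
  have hcw : ‖c - w‖ = 0 := by nlinarith [norm_nonneg (c - w)]
  exact ⟨1, one_pos, by rw [one_smul, ← sub_eq_zero, ← norm_eq_zero, hcw]⟩

/-- For unit vectors `v_1,…,v_n` in a real Hilbert space whose
convex hull does not contain `0`, the minimizer over the convex hull of the
enclosing-ball radius `max_i ‖v_i − c‖` is a positive scalar multiple of the
minimum norm point of the convex hull. -/
theorem mes_center_eq_scaled_min_norm_point
    {H : Type*} [NormedAddCommGroup H] [InnerProductSpace ℝ H] [CompleteSpace H]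
    (n : ℕ) (hn : 0 < n) (v : Fin n → H) (hunit : ∀ i, ‖v i‖ = 1)
    (h0 : (0 : H) ∉ convexHull ℝ (Set.range v))
    (w : H) (hw : w ∈ convexHull ℝ (Set.range v))
    (hwmin : ∀ q ∈ convexHull ℝ (Set.range v), ‖w‖ ≤ ‖q‖)
    (c : H) (hc : c ∈ convexHull ℝ (Set.range v))
    (hcmin : ∀ c' ∈ convexHull ℝ (Set.range v),
      (⨆ i, ‖v i - c‖) ≤ ⨆ i, ‖v i - c'‖) :
    ∃ t : ℝ, 0 < t ∧ c = t • w :=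
  mes_center_eq_scaled_min_norm_point_general n v hunit w hw hwmin c hcmin
end
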